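/- For $n \geq 4$, the non-commuting graph of the quasidihedral group $QD_{2^n}$ is the complete $(2^{n-2}+1)$-partite graph $K_{2^{n-1}-2, 2, 2, \ldots, 2}$ (with $2^{n-2}$ parts of size $2$). -/

import Mathlib

/-!
`QD_{2^n}` is `ZMod (2^(n-1)) ⋊ C₂`, the generator `b` of `C₂` acting by multiplication by the
involution `r = 2^(n-2) - 1`; the normal form `a^i b^ε` identifies the presented group with this
model. In any such `R ⋊ C₂` with `r ≠ 1`, two rotations always commute, a non-central rotation
commutes with no flip, and the flips `a^x b`, `a^y b` commute iff `x - y` lies in the subgroup `K`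
fixed by `r`. So commuting is an equivalence relation on the non-central elements, whose classes
are the non-central rotations and, for each coset of `K`, the flips over it. For `QD_{2^n}`,
`r - 1` is twice a unit, so `K = {0, 2^(n-2)}`: one class of size `2^(n-1) - 2` and `2^(n-2)`
classes of size `2`.
-/

/-- The non-commuting graph of a group. -/
def noncommGraph (G : Type*) [Group G] :
    SimpleGraph {g : G // g ∉ Subgroup.center G} where
  Adj u v := u.1 * v.1 ≠ v.1 * u.1
  symm := ⟨fun _ _ h e => h e.symm⟩
  loopless := ⟨fun _ h => h rfl⟩

/-- Relations of the quasidihedral group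
`QD_{2^n} = ⟨a, b : a^(2^(n-1)) = b² = 1, b a b⁻¹ = a^(2^(n-2)-1)⟩`. -/
def qdRels (n : ℕ) : Set (FreeGroup (Fin 2)) :=
  { (FreeGroup.of 0) ^ (2 ^ (n - 1)), (FreeGroup.of 1) ^ 2,
    FreeGroup.of 1 * FreeGroup.of 0 * (FreeGroup.of 1)⁻¹ *
      ((FreeGroup.of 0) ^ (2 ^ (n - 2) - 1))⁻¹ }

open SimpleGraph

lemma noncommGraph_adj {G : Type*} [Group G] {u v : {g : G // g ∉ Subgroup.center G}} :
    (noncommGraph G).Adj u v ↔ ¬Commute u.1 v.1 := Iff.rfl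

lemma SimpleGraph.completeMultipartiteGraph.nonempty_iso_of_card_eq {ι κ : Type*}
    {V : ι → Type*} {W : κ → Type*} [∀ i, Finite (V i)] [∀ k, Finite (W k)]
    (e : ι ≃ κ) (h : ∀ i, Nat.card (V i) = Nat.card (W (e i))) :
    Nonempty (completeMultipartiteGraph V ≃g completeMultipartiteGraph W) := by
  have F i : V i ≃ W (e i) := (Finite.card_eq.1 (h i)).some
  exact ⟨⟨Equiv.sigmaCongr e F, by simp [Equiv.sigmaCongr, e.injective.ne_iff]⟩⟩

def noncommGraphCongr {G H : Type*} [Group G] [Group H] (e : G ≃* H) :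
    noncommGraph G ≃g noncommGraph H where
  toEquiv := e.toEquiv.subtypeEquiv fun _ => (MulEquivClass.apply_mem_center_iff e).symm.not
  map_rel_iff' := by simp [noncommGraph_adj, Commute, SemiconjBy, ← map_mul]

/-- `rot x` stands for `a ^ x` and `flip x` for `a ^ x * b`, where `b` acts on `R` by
multiplication by `r`; this is a group `R ⋊ C₂` as soon as `r * r = 1`. -/
inductive InvolSemidirect (R : Type*) (r : R) : Type _
  | rot : R → InvolSemidirect R r
  | flip : R → InvolSemidirect R r

namespace InvolSemidirect

variable {R : Type*} [CommRing R] {r : R}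

instance : Mul (InvolSemidirect R r) where
  mul
    | rot x, rot y => rot (x + y)
    | rot x, flip y => flip (x + y)
    | flip x, rot y => flip (x + r * y)
    | flip x, flip y => rot (x + r * y)

instance : One (InvolSemidirect R r) := ⟨rot 0⟩

instance : Inv (InvolSemidirect R r) where
  inv
    | rot x => rot (-x)
    | flip x => flip (-(r * x))

@[simp] lemma rot_mul_rot (x y : R) : (rot x * rot y : InvolSemidirect R r) = rot (x + y) := rfl

@[simp] lemma rot_mul_flip (x y : R) : (rot x * flip y : InvolSemidirect R r) = flip (x + y) :=
  rfl

@[simp] lemma flip_mul_rot (x y : R) :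
    (flip x * rot y : InvolSemidirect R r) = flip (x + r * y) := rfl

@[simp] lemma flip_mul_flip (x y : R) :
    (flip x * flip y : InvolSemidirect R r) = rot (x + r * y) := rfl

@[simp] lemma one_def : (1 : InvolSemidirect R r) = rot 0 := rfl

@[simp] lemma inv_rot (x : R) : (rot x)⁻¹ = (rot (-x) : InvolSemidirect R r) := rfl

@[simp] lemma inv_flip (x : R) : (flip x)⁻¹ = (flip (-(r * x)) : InvolSemidirect R r) := rfl

instance [hr : Fact (r * r = 1)] : Group (InvolSemidirect R r) :=
  Group.ofLeftAxioms
    (fun a b c => by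
      have hr := hr.out
      cases a <;> cases b <;> cases c <;>
        simp only [rot_mul_rot, rot_mul_flip, flip_mul_rot, flip_mul_flip, rot.injEq,
          flip.injEq] <;> grind)
    (fun a => by cases a <;> simp)
    (fun a => by cases a <;> simp)

def fixedSubgroup (r : R) : AddSubgroup R := (AddMonoidHom.mulLeft (r - 1)).ker

lemma mem_fixedSubgroup {x : R} : x ∈ fixedSubgroup r ↔ (r - 1) * x = 0 := Iff.rfl

lemma commute_rot_rot (x y : R) : Commute (rot x : InvolSemidirect R r) (rot y) :=
  congrArg rot (add_comm x y)

lemma commute_rot_flip_iff {x y : R} :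
    Commute (rot x : InvolSemidirect R r) (flip y) ↔ x ∈ fixedSubgroup r := by
  rw [mem_fixedSubgroup, Commute, SemiconjBy, rot_mul_flip, flip_mul_rot, flip.injEq]
  constructor <;> intro h <;> linear_combination -h

lemma commute_flip_flip_iff {x y : R} :
    Commute (flip x : InvolSemidirect R r) (flip y) ↔
      (x : R ⧸ fixedSubgroup r) = y := by
  rw [QuotientAddGroup.eq_iff_sub_mem, mem_fixedSubgroup, Commute, SemiconjBy, flip_mul_flip,
    flip_mul_flip, rot.injEq]
  constructor <;> intro h <;> linear_combination -h

variable (r) in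
def Cell : Option (R ⧸ fixedSubgroup r) → Type _
  | none => {x : R // x ∉ fixedSubgroup r}
  | some c => {x : R // (x : R ⧸ fixedSubgroup r) = c}

instance [Finite R] : ∀ o, Finite (Cell r o)
  | none => Subtype.finite
  | some _ => Subtype.finite

lemma card_cell_none [Finite R] :
    Nat.card (Cell r none) = Nat.card R - Nat.card (fixedSubgroup r) := by
  have := Set.ncard_compl (fixedSubgroup r : Set R)
  rwa [← Nat.card_coe_set_eq, ← Nat.card_coe_set_eq] at this

lemma card_cell_some [Finite R] (c : R ⧸ fixedSubgroup r) :
    Nat.card (Cell r (some c)) = Nat.card (fixedSubgroup r) :=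
  (Nat.card_congr (QuotientAddGroup.preimageMkEquivAddSubgroupProdSet _ {c})).trans (by simp)

variable [Fact (r * r = 1)]

lemma rot_pow (x : R) (k : ℕ) : (rot x : InvolSemidirect R r) ^ k = rot (k * x) := by
  induction k with
  | zero => simp
  | succ k ih => rw [pow_succ, ih, rot_mul_rot, Nat.cast_succ, add_one_mul]

lemma rot_mem_center_iff {x : R} :
    rot x ∈ Subgroup.center (InvolSemidirect R r) ↔ x ∈ fixedSubgroup r := by
  rw [Subgroup.mem_center_iff]
  refine ⟨fun h => commute_rot_flip_iff.1 (h (flip 0)).symm, fun hx g => ?_⟩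
  cases g with
  | rot y => exact (commute_rot_rot x y).symm
  | flip y => exact (commute_rot_flip_iff.2 hx).symm

lemma flip_notMem_center (hr : r ≠ 1) (x : R) :
    flip x ∉ Subgroup.center (InvolSemidirect R r) := by
  intro h
  have : (1 : R) ∈ fixedSubgroup r :=
    commute_rot_flip_iff.1 (Subgroup.mem_center_iff.1 h (rot 1))
  rw [mem_fixedSubgroup, mul_one, sub_eq_zero] at this
  exact hr this

def cellEquiv (hr : r ≠ 1) :
    (Σ o, Cell r o) ≃ {g : InvolSemidirect R r // g ∉ Subgroup.center _} where
  toFun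
    | ⟨none, ⟨x, hx⟩⟩ => ⟨rot x, rot_mem_center_iff.not.2 hx⟩
    | ⟨some _, ⟨x, _⟩⟩ => ⟨flip x, flip_notMem_center hr x⟩
  invFun
    | ⟨rot x, hx⟩ => ⟨none, x, rot_mem_center_iff.not.1 hx⟩
    | ⟨flip x, _⟩ => ⟨some x, x, rfl⟩
  left_inv
    | ⟨none, _⟩ => rfl
    | ⟨some _, ⟨_, rfl⟩⟩ => rfl
  right_inv
    | ⟨rot _, _⟩ => rfl
    | ⟨flip _, _⟩ => rfl

def noncommGraphIso (hr : r ≠ 1) :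
    completeMultipartiteGraph (Cell r) ≃g noncommGraph (InvolSemidirect R r) where
  toEquiv := cellEquiv hr
  map_rel_iff' := by
    rintro ⟨_ | c, x, hx⟩ ⟨_ | d, y, hy⟩
    · simpa [noncommGraph_adj, cellEquiv] using commute_rot_rot (r := r) x y
    · simpa [noncommGraph_adj, cellEquiv, commute_rot_flip_iff] using hx
    · simpa [noncommGraph_adj, cellEquiv, Commute.symm_iff (a := flip x), commute_rot_flip_iff]
        using hy
    · subst hx hy
      simp [noncommGraph_adj, cellEquiv, commute_flip_flip_iff]

end InvolSemidirect

def semidirectRels (N s : ℕ) : Set (FreeGroup (Fin 2)) :=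
  { FreeGroup.of 0 ^ N, FreeGroup.of 1 ^ 2,
    FreeGroup.of 1 * FreeGroup.of 0 * (FreeGroup.of 1)⁻¹ * (FreeGroup.of 0 ^ s)⁻¹ }

namespace semidirectRels

open PresentedGroup

variable {N s : ℕ}

lemma of_zero_pow : (of 0 : PresentedGroup (semidirectRels N s)) ^ N = 1 :=
  (map_pow _ _ _).symm.trans (one_of_mem (by simp [semidirectRels]))

lemma of_one_mul_self : (of 1 * of 1 : PresentedGroup (semidirectRels N s)) = 1 :=
  (pow_two _).symm.trans <|
    (map_pow _ _ _).symm.trans (one_of_mem (x := FreeGroup.of 1 ^ 2) (by simp [semidirectRels]))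

lemma of_one_mul_of_zero_pow (i : ℕ) :
    (of 1 * of 0 ^ i : PresentedGroup (semidirectRels N s)) = of 0 ^ (s * i) * of 1 := by
  have hconj : (of 1 * of 0 * (of 1)⁻¹ : PresentedGroup (semidirectRels N s)) = of 0 ^ s := by
    have h := one_of_mem (rels := semidirectRels N s)
      (x := FreeGroup.of 1 * FreeGroup.of 0 * (FreeGroup.of 1)⁻¹ * (FreeGroup.of 0 ^ s)⁻¹)
      (by simp [semidirectRels])
    rwa [map_mul, map_mul, map_mul, map_inv, map_inv, map_pow, mul_inv_eq_one] at h
  rw [pow_mul, ← hconj, conj_pow, inv_mul_cancel_right]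

lemma of_one_inv : (of 1 : PresentedGroup (semidirectRels N s))⁻¹ = of 1 :=
  inv_eq_of_mul_eq_one_right of_one_mul_self

lemma of_zero_pow_mod (i : ℕ) :
    (of 0 : PresentedGroup (semidirectRels N s)) ^ (i % N) = of 0 ^ i :=
  (pow_eq_pow_mod _ of_zero_pow).symm

variable [NeZero N]

lemma of_zero_inv : (of 0 : PresentedGroup (semidirectRels N s))⁻¹ = of 0 ^ (N - 1) :=
  inv_eq_of_mul_eq_one_left <| by
    rw [← pow_succ, Nat.sub_add_cancel NeZero.one_le, of_zero_pow]

lemma exists_eq_pow_or_eq_pow_mul (g : PresentedGroup (semidirectRels N s)) :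
    ∃ i : ℕ, g = of 0 ^ i ∨ g = of 0 ^ i * of 1 := by
  let NF (y : PresentedGroup (semidirectRels N s)) :=
    ∃ i : ℕ, y = of 0 ^ i ∨ y = of 0 ^ i * of 1
  have pow_mul k y : NF y → NF (of 0 ^ k * y) := by
    rintro ⟨i, rfl | rfl⟩
    · exact ⟨k + i, .inl (pow_add ..).symm⟩
    · exact ⟨k + i, .inr (by rw [pow_add, mul_assoc])⟩
  have of_one_mul y : NF y → NF (of 1 * y) := by
    rintro ⟨i, rfl | rfl⟩
    · exact ⟨s * i, .inr (of_one_mul_of_zero_pow i)⟩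
    · exact ⟨s * i, .inl (by
        rw [← mul_assoc, of_one_mul_of_zero_pow, mul_assoc, of_one_mul_self, mul_one])⟩
  have hg : g ∈ Subgroup.closure (Set.range of) := by simp
  induction hg using Subgroup.closure_induction_left with
  | one => exact ⟨0, .inl (pow_zero _).symm⟩
  | mul_left x hx y _ ih =>
    obtain ⟨j, rfl⟩ := hx
    obtain rfl | rfl : j = 0 ∨ j = 1 := by fin_cases j <;> simp
    · simpa using pow_mul 1 y ih
    · exact of_one_mul y ih
  | inv_mul_cancel x hx y _ ih =>
    obtain ⟨j, rfl⟩ := hx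
    obtain rfl | rfl : j = 0 ∨ j = 1 := by fin_cases j <;> simp
    · rw [of_zero_inv]
      exact pow_mul _ y ih
    · rw [of_one_inv]
      exact of_one_mul y ih

open InvolSemidirect in
def toInvolSemidirect [Fact ((s : ZMod N) * s = 1)] :
    PresentedGroup (semidirectRels N s) →* InvolSemidirect (ZMod N) (s : ZMod N) :=
  toGroup (f := ![rot 1, flip 0]) <| by
    rintro _ (rfl | rfl | rfl) <;> simp [rot_pow, pow_two]

def normalForm : InvolSemidirect (ZMod N) (s : ZMod N) → PresentedGroup (semidirectRels N s)
  | .rot x => of 0 ^ x.val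
  | .flip x => of 0 ^ x.val * of 1

def equivInvolSemidirect [Fact ((s : ZMod N) * s = 1)] :
    PresentedGroup (semidirectRels N s) ≃* InvolSemidirect (ZMod N) (s : ZMod N) where
  toFun := toInvolSemidirect
  invFun := normalForm
  left_inv g := by
    obtain ⟨i, rfl | rfl⟩ := exists_eq_pow_or_eq_pow_mul g <;>
      simp [toInvolSemidirect, normalForm, InvolSemidirect.rot_pow, of_zero_pow_mod]
  right_inv y := by
    cases y <;> simp [toInvolSemidirect, normalForm, InvolSemidirect.rot_pow]
  map_mul' := map_mul _

end semidirectRels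

lemma ZMod.two_mul_eq_zero_iff {N m : ℕ} [NeZero m] (hN : N = 2 * m) (x : ZMod N) :
    2 * x = 0 ↔ x = 0 ∨ x = m := by
  subst hN
  obtain ⟨v, hv, rfl⟩ : ∃ v < 2 * m, x = (v : ZMod (2 * m)) :=
    ⟨x.val, x.val_lt, (ZMod.natCast_zmod_val x).symm⟩
  have hm : m < 2 * m := by have := NeZero.pos m; omega
  rw [show (2 : ZMod (2 * m)) * v = ((2 * v : ℕ) : ZMod (2 * m)) by push_cast; rfl,
    ← Nat.cast_zero, ZMod.natCast_eq_natCast_iff', ZMod.natCast_eq_natCast_iff',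
    ZMod.natCast_eq_natCast_iff', Nat.mod_eq_of_lt hv, Nat.mod_eq_of_lt hm, Nat.zero_mod,
    ← Nat.dvd_iff_mod_eq_zero, Nat.mul_dvd_mul_iff_left two_pos]
  constructor
  · rintro ⟨c, rfl⟩
    have : c < 2 := lt_of_mul_lt_mul_left (hv.trans_eq (mul_comm 2 m)) (Nat.zero_le m)
    interval_cases c <;> simp
  · rintro (rfl | rfl) <;> simp

section Quasidihedral

open InvolSemidirect

variable {n : ℕ}

-- the twist of `qdRels n`, with its `ℕ`-subtraction (harmless, as `1 ≤ 2 ^ (n - 2)`)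
local notation "ρ" => ((2 ^ (n - 2) - 1 : ℕ) : ZMod (2 ^ (n - 1)))

lemma two_pow_sub_one_eq_two_mul (hn : 2 ≤ n) : 2 ^ (n - 1) = 2 * 2 ^ (n - 2) := by
  rw [← pow_succ']
  congr 1
  omega

lemma qdTwist_mul_self (hn : 3 ≤ n) : ρ * ρ = 1 := by
  have h0 : (2 : ZMod (2 ^ (n - 1))) ^ (n - 1) = 0 := by exact_mod_cast ZMod.natCast_self _
  have hsq : (2 : ZMod (2 ^ (n - 1))) ^ (n - 2) * 2 ^ (n - 2) = 2 ^ (n - 1) * 2 ^ (n - 3) := by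
    rw [← pow_add, ← pow_add]
    congr 1
    omega
  have hdouble : (2 : ZMod (2 ^ (n - 1))) * 2 ^ (n - 2) = 2 ^ (n - 1) := by
    rw [← pow_succ']
    congr 1
    omega
  push_cast [Nat.one_le_two_pow]
  linear_combination hsq - hdouble + (2 ^ (n - 3) - 1) * h0

lemma mem_fixedSubgroup_qdTwist_iff (hn : 4 ≤ n) (x : ZMod (2 ^ (n - 1))) :
    x ∈ fixedSubgroup ρ ↔ x = 0 ∨ x = ((2 ^ (n - 2) : ℕ) : ZMod (2 ^ (n - 1))) := by
  set u : ZMod (2 ^ (n - 1)) := ((2 ^ (n - 3) - 1 : ℕ) : ZMod (2 ^ (n - 1)))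
  have hu : IsUnit u := by
    refine (ZMod.isUnit_iff_coprime _ _).2 (Nat.Coprime.pow_right _ (Nat.coprime_two_right.2 ?_))
    exact Nat.Even.sub_odd Nat.one_le_two_pow (Nat.even_pow.2 ⟨even_two, by omega⟩) odd_one
  have hsub : ρ - 1 = u * 2 := by
    push_cast [u, Nat.one_le_two_pow]
    rw [show n - 2 = n - 3 + 1 by omega, pow_succ]
    ring
  rw [mem_fixedSubgroup, hsub, mul_assoc, hu.mul_right_eq_zero,
    ZMod.two_mul_eq_zero_iff (two_pow_sub_one_eq_two_mul (by omega))]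

lemma card_fixedSubgroup_qdTwist (hn : 4 ≤ n) : Nat.card (fixedSubgroup ρ) = 2 := by
  have hM : ((2 ^ (n - 2) : ℕ) : ZMod (2 ^ (n - 1))) ≠ 0 :=
    (ZMod.natCast_eq_zero_iff _ _).not.2 <|
      Nat.not_dvd_of_pos_of_lt (by positivity) (Nat.pow_lt_pow_right one_lt_two (by omega))
  have hK : (fixedSubgroup ρ : Set (ZMod (2 ^ (n - 1)))) = {0, ((2 ^ (n - 2) : ℕ) : ZMod _)} :=
    Set.ext (mem_fixedSubgroup_qdTwist_iff hn)
  rw [← SetLike.coe_sort_coe, hK, Nat.card_coe_set_eq, Set.ncard_pair hM.symm]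

lemma qdTwist_ne_one (hn : 4 ≤ n) : ρ ≠ 1 := by
  intro h
  have htop : fixedSubgroup ρ = ⊤ :=
    eq_top_iff.2 fun x _ => by rw [mem_fixedSubgroup, h, sub_self, zero_mul]
  have hcard := card_fixedSubgroup_qdTwist hn
  rw [htop, AddSubgroup.card_top, Nat.card_zmod] at hcard
  have : 2 ^ 3 ≤ 2 ^ (n - 1) := Nat.pow_le_pow_right two_pos (by omega)
  omega

lemma card_quotient_fixedSubgroup_qdTwist (hn : 4 ≤ n) :
    Nat.card (ZMod (2 ^ (n - 1)) ⧸ fixedSubgroup ρ) = 2 ^ (n - 2) := by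
  have := AddSubgroup.card_eq_card_quotient_mul_card_addSubgroup (fixedSubgroup ρ)
  rw [Nat.card_zmod, card_fixedSubgroup_qdTwist hn] at this
  have := two_pow_sub_one_eq_two_mul (by omega : 2 ≤ n)
  omega

lemma nonempty_iso_cell_qdTwist (hn : 4 ≤ n) :
    Nonempty (completeMultipartiteGraph (Cell ρ) ≃g completeMultipartiteGraph
      fun i : Fin (2 ^ (n - 2) + 1) => Fin (if i = 0 then 2 ^ (n - 1) - 2 else 2)) := by
  obtain ⟨e⟩ := Finite.card_eq.1 <| (card_quotient_fixedSubgroup_qdTwist hn).trans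
    (Nat.card_fin (2 ^ (n - 2))).symm
  refine completeMultipartiteGraph.nonempty_iso_of_card_eq
    (e.optionCongr.trans (finSuccEquiv _).symm) ?_
  rintro (_ | c)
  · rw [card_cell_none, Nat.card_zmod, card_fixedSubgroup_qdTwist hn]
    simp
  · rw [card_cell_some, card_fixedSubgroup_qdTwist hn]
    simp

end Quasidihedral

theorem noncommGraph_quasidihedral (n : ℕ) (hn : 4 ≤ n) :
    Nonempty (noncommGraph (PresentedGroup (qdRels n)) ≃g
      SimpleGraph.completeMultipartiteGraph
        fun i : Fin (2 ^ (n - 2) + 1) => Fin (if i = 0 then 2 ^ (n - 1) - 2 else 2)) := by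
  have : Fact (((2 ^ (n - 2) - 1 : ℕ) : ZMod (2 ^ (n - 1))) * (2 ^ (n - 2) - 1 : ℕ) = 1) :=
    ⟨qdTwist_mul_self (by omega)⟩
  obtain ⟨ψ⟩ := nonempty_iso_cell_qdTwist hn
  exact ⟨(noncommGraphCongr semidirectRels.equivInvolSemidirect).trans
    ((InvolSemidirect.noncommGraphIso (qdTwist_ne_one hn)).symm.trans ψ)⟩
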